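/- If a mixed chain complex A is semi-classical, then A admits non-commutative Hodge-to-de Rham degeneration data: there exists a deformation retract (i, p, h) of (A, d) onto its homology H(A) = (Ker d_n / d(A_{n+1}), 0) such that moreover Δ ∘ i = 0; in particular p ∘ (Δ ∘ h)^{m−1} ∘ Δ ∘ i = 0 for every m ≥ 1. -/

import Mathlib

/-- The degree-`(n+1)` piece of the `d`-homology of a mixed chain complex:
`H_{n+1}(A) = Ker d_{n+1} / Im d_{n+2}`.  Degrees are indexed so that
`d n : A (n+1) →ₗ A n`. -/
abbrev dHomology (K : Type*) [Field K] (A : ℤ → Type*)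
    [∀ n, AddCommGroup (A n)] [∀ n, Module K (A n)]
    (d : ∀ n : ℤ, A (n + 1) →ₗ[K] A n) (n : ℤ) : Type _ :=
  ↥(LinearMap.ker (d n)) ⧸
    Submodule.comap (LinearMap.ker (d n)).subtype (LinearMap.range (d (n + 1)))

/-- `Reach Δ h z w` holds exactly when `w = (Δ ∘ h)^k z` for some `k ≥ 0`;
it encodes the iterated composites `(Δ ∘ h)^{m−1}` elementwise. -/
inductive Reach (K : Type*) [Field K] (A : ℤ → Type*)
    [∀ n, AddCommGroup (A n)] [∀ n, Module K (A n)]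
    (Δ : ∀ n : ℤ, A n →ₗ[K] A (n + 1)) (h : ∀ n : ℤ, A n →ₗ[K] A (n + 1)) :
    ∀ ⦃m : ℤ⦄, A m → ∀ ⦃m' : ℤ⦄, A m' → Prop where
  | refl {m : ℤ} (z : A m) : Reach K A Δ h z z
  | step {m m' : ℤ} (z : A m) (w : A m') :
      Reach K A Δ h z w → Reach K A Δ h z (Δ (m' + 1) (h m' w))


/-!
Over a field every subspace has a complement. Split each `A (n + 1)` as `B ⊕ H ⊕ C`, where `B`
are the boundaries, `Z = B ⊕ H` the cycles and `C` a complement of `Z`. Semi-classicality says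
`Z = B + (Z ∩ Ker Δ)`, so in the modular complemented lattice of subspaces of `Z` the complement
`H` of `B` can be taken inside `Ker Δ`. Then `i` is the inclusion of `H ≅ H(A)`, `p` projects
onto `Z` along `C` and passes to homology, and `h` inverts `d : C ≃ B` and vanishes on `H ⊕ C`.
Since `Δ ∘ i = 0`, every `p ∘ (Δ ∘ h)^{m−1} ∘ Δ ∘ i` vanishes.
-/

open Submodule LinearMap

namespace LinearMap

variable {R V W : Type*} [Ring R] [AddCommGroup V] [Module R V] [AddCommGroup W] [Module R W]
  (f : V →ₗ[R] W) {C : Submodule R V} {S : Submodule R W}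

/-- Inverts `f : C ≃ range f` and vanishes on `S`. -/
noncomputable def complInverse (hC : IsCompl (ker f) C) (hS : IsCompl (range f) S) :
    W →ₗ[R] V :=
  ofIsCompl hS
    (C.subtype ∘ₗ ((ker f).quotientEquivOfIsCompl C hC).toLinearMap ∘ₗ
      f.quotKerEquivRange.symm.toLinearMap) 0

variable {f} (hC : IsCompl (ker f) C) (hS : IsCompl (range f) S)

lemma complInverse_apply_of_mem {w : W} (hw : w ∈ S) : f.complInverse hC hS w = 0 :=
  ofIsCompl_apply_right hS ⟨w, hw⟩

lemma complInverse_apply_apply (v : V) :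
    f.complInverse hC hS (f v) = C.projection (ker f) hC.symm v := by
  simp [complInverse, ofIsCompl_apply_left hS ⟨f v, mem_range_self f v⟩]

lemma complInverse_apply_apply_of_mem {v : V} (hv : v ∈ C) : f.complInverse hC hS (f v) = v := by
  rw [complInverse_apply_apply, projection_apply_of_mem_left hC.symm hv]

lemma apply_complInverse_apply (v : V) : f (f.complInverse hC hS (f v)) = f v := by
  rw [complInverse_apply_apply, projection_eq_self_sub_projection hC, map_sub,
    mem_ker.mp (projection_apply_mem hC v), sub_zero]

end LinearMap

section MixedComplex

variable {K : Type*} [Field K] {A : ℤ → Type*} [∀ n, AddCommGroup (A n)] [∀ n, Module K (A n)]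
  (d : ∀ n : ℤ, A (n + 1) →ₗ[K] A n)

abbrev boundaries (n : ℤ) : Submodule K (ker (d n)) :=
  (range (d (n + 1))).comap (ker (d n)).subtype

lemma exists_isCompl_boundaries_le_ker {M : Type*} [AddCommGroup M] [Module K M] {n : ℤ}
    (Δ : A (n + 1) →ₗ[K] M)
    (hsc : ∀ x : A (n + 1), d n x = 0 →
      ∃ y : A (n + 1), d n y = 0 ∧ Δ y = 0 ∧ x - y ∈ range (d (n + 1))) :
    ∃ H : Submodule K (ker (d n)), H ≤ (ker Δ).comap (ker (d n)).subtype ∧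
      IsCompl (boundaries d n) H := by
  have hcod : Codisjoint ((ker Δ).comap (ker (d n)).subtype) (boundaries d n) := by
    refine codisjoint_iff_exists_add_eq.mpr fun x => ?_
    obtain ⟨y, hy, hΔy, hxy⟩ := hsc x x.2
    exact ⟨⟨y, hy⟩, x - ⟨y, hy⟩, hΔy, hxy, add_sub_cancel _ _⟩
  obtain ⟨H, hHle, hH⟩ := hcod.exists_isCompl
  exact ⟨H, hHle, hH.symm⟩

variable {d} {C : ∀ n, Submodule K (A (n + 1))} (hC : ∀ n, IsCompl (ker (d n)) (C n))
  {H : ∀ n, Submodule K (ker (d n))} (hH : ∀ n, IsCompl (boundaries d n) (H n))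

noncomputable def harmonicRep (n : ℤ) : dHomology K A d n →ₗ[K] A (n + 1) :=
  (ker (d n)).subtype ∘ₗ (H n).subtype ∘ₗ
    ((boundaries d n).quotientEquivOfIsCompl _ (hH n)).toLinearMap

noncomputable def homologyProj (n : ℤ) : A (n + 1) →ₗ[K] dHomology K A d n :=
  (boundaries d n).mkQ ∘ₗ (ker (d n)).projectionOnto (C n) (hC n)

variable (C H) in
/-- The complement `H ⊕ C` of the boundaries in `A (n + 1)`, reindexed by `ν = n + 1` so that it
is a family over all degrees, as the homotopy `A ν → A (ν + 1)` requires. -/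
def boundaryCompl : ∀ ν : ℤ, Submodule K (A ν) :=
  Equiv.piCongrLeft (fun ν => Submodule K (A ν)) (Equiv.addRight 1)
    fun n => (H n).map (ker (d n)).subtype ⊔ C n

lemma boundaryCompl_succ (n : ℤ) :
    boundaryCompl C H (n + 1) = (H n).map (ker (d n)).subtype ⊔ C n :=
  Equiv.piCongrLeft_apply_apply (P := fun ν => Submodule K (A ν)) (e := Equiv.addRight 1) _ n

lemma isCompl_boundaryCompl (hd : ∀ n, range (d (n + 1)) ≤ ker (d n))
    (hC : ∀ n, IsCompl (ker (d n)) (C n)) (hH : ∀ n, IsCompl (boundaries d n) (H n)) (ν : ℤ) :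
    IsCompl (range (d ν)) (boundaryCompl C H ν) := by
  obtain ⟨n, rfl⟩ : ∃ n, ν = n + 1 := ⟨ν - 1, by ring⟩
  have hBH := Set.Iic.isCompl_iff.mp ((ker (d n)).mapIic.isCompl (hH n))
  simp only [coe_mapIic_apply, map_comap_subtype, inf_of_le_right (hd n)] at hBH
  rw [boundaryCompl_succ]
  exact hBH.1.isCompl_sup_right_of_isCompl_sup_left (hBH.2.symm ▸ hC n)

noncomputable def retractHomotopy (hd : ∀ n, range (d (n + 1)) ≤ ker (d n)) (ν : ℤ) :
    A ν →ₗ[K] A (ν + 1) :=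
  (d ν).complInverse (hC ν) (isCompl_boundaryCompl hd hC hH ν)

lemma d_comp_harmonicRep (n : ℤ) : d n ∘ₗ harmonicRep hH n = 0 :=
  LinearMap.ext fun x => ((boundaries d n).quotientEquivOfIsCompl _ (hH n) x : ker (d n)).2

lemma comp_harmonicRep_eq_zero {M : Type*} [AddCommGroup M] [Module K M] {n : ℤ}
    (Δ : A (n + 1) →ₗ[K] M) (hHΔ : H n ≤ (ker Δ).comap (ker (d n)).subtype) :
    Δ ∘ₗ harmonicRep hH n = 0 :=
  LinearMap.ext fun x => hHΔ ((boundaries d n).quotientEquivOfIsCompl _ (hH n) x).2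

lemma homologyProj_comp_harmonicRep (n : ℤ) : homologyProj hC n ∘ₗ harmonicRep hH n = .id := by
  refine LinearMap.ext fun x => ?_
  simp [homologyProj, harmonicRep, -toLinearMap_quotientEquivOfIsCompl]

lemma homologyProj_apply_of_mem_range (hd : ∀ n, range (d (n + 1)) ≤ ker (d n)) {n : ℤ}
    {x : A (n + 1)} (hx : x ∈ range (d (n + 1))) : homologyProj hC n x = 0 := by
  simp [homologyProj, projectionOnto_apply_of_mem_left (hC n) (hd n hx), hx]

lemma homologyProj_apply_of_mem_compl {n : ℤ} {x : A (n + 1)} (hx : x ∈ C n) :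
    homologyProj hC n x = 0 := by
  simp [homologyProj, projectionOnto_apply_of_mem_right (hC n) hx]

lemma harmonicRep_homologyProj_of_mem {n : ℤ} {x : A (n + 1)}
    (hx : x ∈ (H n).map (ker (d n)).subtype) : harmonicRep hH n (homologyProj hC n x) = x := by
  obtain ⟨y, hy, rfl⟩ := hx
  simpa [homologyProj, harmonicRep] using hy

lemma id_sub_harmonicRep_comp_homologyProj (hd : ∀ n, range (d (n + 1)) ≤ ker (d n)) (n : ℤ) :
    LinearMap.id - harmonicRep hH n ∘ₗ homologyProj hC n =
      d (n + 1) ∘ₗ retractHomotopy hC hH hd (n + 1) + retractHomotopy hC hH hd n ∘ₗ d n := by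
  have hS := isCompl_boundaryCompl hd hC hH (n + 1)
  have hker : ∀ x ∈ boundaryCompl C H (n + 1), retractHomotopy hC hH hd (n + 1) x = 0 :=
    fun x hx => complInverse_apply_of_mem _ _ hx
  refine ext_on_codisjoint hS.codisjoint ?_ ?_
  · rintro _ ⟨y, rfl⟩
    have hdd : d n (d (n + 1) y) = 0 := hd n ⟨y, rfl⟩
    simp [homologyProj_apply_of_mem_range hC hd ⟨y, rfl⟩, hdd, retractHomotopy,
      apply_complInverse_apply]
  rw [boundaryCompl_succ] at hker ⊢
  refine eqOn_sup ?_ ?_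
  · intro x hx
    have hdx : d n x = 0 := map_subtype_le _ _ hx
    simp [harmonicRep_homologyProj_of_mem hC hH hx, hker x (mem_sup_left hx), hdx]
  · intro x hx
    have hhd : retractHomotopy hC hH hd n (d n x) = x := complInverse_apply_apply_of_mem _ _ hx
    simp [homologyProj_apply_of_mem_compl hC hx, hker x (mem_sup_right hx), hhd]

lemma Reach.eq_zero_of_eq_zero {Δ h : ∀ n : ℤ, A n →ₗ[K] A (n + 1)} {m m' : ℤ} {z : A m}
    {w : A m'} (hr : Reach K A Δ h z w) (hz : z = 0) : w = 0 := by
  induction hr with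
  | refl => exact hz
  | step _ _ _ ih => simp [ih hz]

end MixedComplex

theorem semiclassical_implies_ncHodgeDeRham_general
    (K : Type*) [Field K] (A : ℤ → Type*)
    [∀ n, AddCommGroup (A n)] [∀ n, Module K (A n)]
    (d : ∀ n : ℤ, A (n + 1) →ₗ[K] A n) (Δ : ∀ n : ℤ, A n →ₗ[K] A (n + 1))
    (hd : ∀ n : ℤ, (d n).comp (d (n + 1)) = 0)
    (hsc : ∀ n : ℤ, ∀ x : A (n + 1), d n x = 0 →
      ∃ y : A (n + 1), d n y = 0 ∧ Δ (n + 1) y = 0 ∧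
        x - y ∈ LinearMap.range (d (n + 1))) :
    ∃ (i : ∀ n : ℤ, dHomology K A d n →ₗ[K] A (n + 1))
      (p : ∀ n : ℤ, A (n + 1) →ₗ[K] dHomology K A d n)
      (h : ∀ n : ℤ, A n →ₗ[K] A (n + 1)),
      (∀ n : ℤ, (d n).comp (i n) = 0) ∧
      (∀ n : ℤ, (p n).comp (d (n + 1)) = 0) ∧
      (∀ n : ℤ, (p n).comp (i n) = LinearMap.id) ∧
      (∀ n : ℤ, LinearMap.id - (i n).comp (p n) =
        (d (n + 1)).comp (h (n + 1)) + (h n).comp (d n)) ∧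
      (∀ n : ℤ, (Δ (n + 1)).comp (i n) = 0) ∧
      (∀ (n : ℤ) (x : dHomology K A d n) (k : ℤ) (z : A (k + 1)),
        Reach K A Δ h (Δ (n + 1) (i n x)) z → p k z = 0) := by
  have hd' : ∀ n, range (d (n + 1)) ≤ ker (d n) := fun n => range_le_ker_iff.mpr (hd n)
  choose C hC using fun n => Submodule.exists_isCompl (ker (d n))
  choose H hHΔ hH using fun n => exists_isCompl_boundaries_le_ker d (Δ (n + 1)) (hsc n)
  have hΔi : ∀ n, Δ (n + 1) ∘ₗ harmonicRep hH n = 0 :=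
    fun n => comp_harmonicRep_eq_zero hH (Δ (n + 1)) (hHΔ n)
  refine ⟨harmonicRep hH, homologyProj hC, retractHomotopy hC hH hd', d_comp_harmonicRep hH,
    fun n => LinearMap.ext fun y => homologyProj_apply_of_mem_range hC hd' ⟨y, rfl⟩,
    homologyProj_comp_harmonicRep hC hH, id_sub_harmonicRep_comp_homologyProj hC hH hd', hΔi,
    fun n x k z hr => ?_⟩
  rw [hr.eq_zero_of_eq_zero (LinearMap.congr_fun (hΔi n) x), map_zero]

/-- If a mixed chain complex `A` is semi-classical, then `A` admits
non-commutative Hodge-to-de Rham degeneration data: there is a deformation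
retract `(i, p, h)` of `(A, d)` onto its homology `(H(A), 0)` such that
moreover `Δ ∘ i = 0`; in particular `p ∘ (Δ ∘ h)^{m−1} ∘ Δ ∘ i = 0` for every
`m ≥ 1` (the latter being expressed elementwise via `Reach`). -/
theorem semiclassical_implies_ncHodgeDeRham
    (K : Type*) [Field K] [CharZero K] (A : ℤ → Type*)
    [∀ n, AddCommGroup (A n)] [∀ n, Module K (A n)]
    (d : ∀ n : ℤ, A (n + 1) →ₗ[K] A n) (Δ : ∀ n : ℤ, A n →ₗ[K] A (n + 1))
    (hd : ∀ n : ℤ, (d n).comp (d (n + 1)) = 0)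
    (hΔ : ∀ n : ℤ, (Δ (n + 1)).comp (Δ n) = 0)
    (hdΔ : ∀ n : ℤ, (Δ n).comp (d n) + (d (n + 1)).comp (Δ (n + 1)) = 0)
    (hsc : ∀ n : ℤ, ∀ x : A (n + 1), d n x = 0 →
      ∃ y : A (n + 1), d n y = 0 ∧ Δ (n + 1) y = 0 ∧
        x - y ∈ LinearMap.range (d (n + 1))) :
    ∃ (i : ∀ n : ℤ, dHomology K A d n →ₗ[K] A (n + 1))
      (p : ∀ n : ℤ, A (n + 1) →ₗ[K] dHomology K A d n)
      (h : ∀ n : ℤ, A n →ₗ[K] A (n + 1)),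
      (∀ n : ℤ, (d n).comp (i n) = 0) ∧
      (∀ n : ℤ, (p n).comp (d (n + 1)) = 0) ∧
      (∀ n : ℤ, (p n).comp (i n) = LinearMap.id) ∧
      (∀ n : ℤ, LinearMap.id - (i n).comp (p n) =
        (d (n + 1)).comp (h (n + 1)) + (h n).comp (d n)) ∧
      (∀ n : ℤ, (Δ (n + 1)).comp (i n) = 0) ∧
      (∀ (n : ℤ) (x : dHomology K A d n) (k : ℤ) (z : A (k + 1)),
        Reach K A Δ h (Δ (n + 1) (i n x)) z → p k z = 0) :=
  semiclassical_implies_ncHodgeDeRham_general K A d Δ hd hsc
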